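/- Assume each X_i (0 ≤ i ≤ n) is a compact Polish space and each Y_i is a Polish space, and let Q = (q_i) be a forward family satisfying condition (CB). Then the family of probability measures { →Q_{0,n}(· | x^n) : x^n ∈ X_{0,n} } on Y_{0,n} is uniformly tight, and hence relatively compact in the topology of weak convergence of probability measures. -/

import Mathlib

/-! Condition (CB) says that each `q_i` is a Feller kernel, and `→Q_{0,n}` is built from the
`q_i` by composition products, comaps and maps along continuous functions, all of which preserve
the Feller property. Hence `x ↦ →Q_{0,n}(· | x)` is a continuous map from the compact space
`X_{0,n}` into the probability measures with the weak topology: its image is compact, hence tight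
by Prokhorov's theorem, and a convergent subsequence of `x_k` yields a weakly convergent
subsequence of measures. -/

open MeasureTheory ProbabilityTheory Filter
open scoped ENNReal NNReal

namespace PaperDI

lemma measurable_finSnoc {Z : ℕ → Type*} [∀ i, MeasurableSpace (Z i)] (k : ℕ) :
    Measurable (fun p : (∀ j : Fin k, Z j) × Z k =>
      (Fin.snoc p.1 p.2 : ∀ j : Fin (k + 1), Z j)) := by
  apply measurable_pi_lambda
  intro j
  induction j using Fin.lastCases with
  | last => simpa using measurable_snd
  | cast i =>
    simp only [Fin.snoc_castSucc]
    first
      | exact (measurable_pi_apply i).comp measurable_fst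
      | fun_prop

/-- Restriction of a prefix of length `k+1` to the prefix of length `k`. -/
def restr {Z : ℕ → Type*} (k : ℕ) (z : ∀ j : Fin (k + 1), Z j) : ∀ j : Fin k, Z j :=
  fun j => z j.castSucc

lemma measurable_restr {Z : ℕ → Type*} [∀ i, MeasurableSpace (Z i)] (k : ℕ) :
    Measurable (restr (Z := Z) k) :=
  measurable_pi_lambda _ fun _ => measurable_pi_apply _

variable (X Y : ℕ → Type*) [∀ i, MeasurableSpace (X i)] [∀ i, MeasurableSpace (Y i)]

/-- A feedback family `(p_0, …, p_n)`: `p_0` is a probability measure on `X_0` (a Markov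
kernel from the one-point space of empty prefixes) and `p_i` is a Markov kernel from
`X_{0,i-1} × Y_{0,i-1}` to `X_i`. -/
structure FeedbackFamily (n : ℕ) where
  p : ∀ i : Fin (n + 1), Kernel ((∀ j : Fin (i : ℕ), X j) × (∀ j : Fin (i : ℕ), Y j)) (X i)
  markov : ∀ i, IsMarkovKernel (p i)

/-- A forward family `(q_0, …, q_n)`: `q_i` is a Markov kernel from
`Y_{0,i-1} × X_{0,i}` to `Y_i`. -/
structure ForwardFamily (n : ℕ) where
  q : ∀ i : Fin (n + 1), Kernel ((∀ j : Fin (i : ℕ), Y j) × (∀ j : Fin ((i : ℕ) + 1), X j)) (Y i)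
  markov : ∀ i, IsMarkovKernel (q i)

variable {X Y} {n : ℕ}

/-- The causally conditioned kernel `←P_{0,k}` from `Y_{0,k-1}` to `X_{0,k}`. -/
noncomputable def back (P : FeedbackFamily X Y n) :
    (k : ℕ) → k ≤ n → Kernel (∀ j : Fin k, Y j) (∀ j : Fin (k + 1), X j)
  | 0, _ =>
      Kernel.map ((P.p ⟨0, Nat.succ_pos n⟩).comap (fun _ => default) measurable_const)
        (fun x0 => (Fin.snoc default x0 : ∀ j : Fin 1, X j))
  | (k + 1), h =>
      Kernel.map
        (((back P k (by omega)).comap (restr k) (measurable_restr k)) ⊗ₖ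
          ((P.p ⟨k + 1, by omega⟩).comap
            (fun t : (∀ j : Fin (k + 1), Y j) × (∀ j : Fin (k + 1), X j) => (t.2, t.1))
            (measurable_snd.prodMk measurable_fst)))
        (fun t : (∀ j : Fin (k + 1), X j) × X (k + 1) =>
          (Fin.snoc t.1 t.2 : ∀ j : Fin (k + 2), X j))

/-- The causally conditioned kernel `→Q_{0,k}` from `X_{0,k}` to `Y_{0,k}`. -/
noncomputable def fwd (Q : ForwardFamily X Y n) :
    (k : ℕ) → k ≤ n → Kernel (∀ j : Fin (k + 1), X j) (∀ j : Fin (k + 1), Y j)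
  | 0, _ =>
      Kernel.map ((Q.q ⟨0, Nat.succ_pos n⟩).comap (fun x => (default, x))
          (measurable_const.prodMk measurable_id))
        (fun y0 => (Fin.snoc default y0 : ∀ j : Fin 1, Y j))
  | (k + 1), h =>
      Kernel.map
        (((fwd Q k (by omega)).comap (restr (k + 1)) (measurable_restr (k + 1))) ⊗ₖ
          ((Q.q ⟨k + 1, by omega⟩).comap
            (fun t : (∀ j : Fin (k + 2), X j) × (∀ j : Fin (k + 1), Y j) => (t.2, t.1))
            (measurable_snd.prodMk measurable_fst)))
        (fun t : (∀ j : Fin (k + 1), Y j) × Y (k + 1) =>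
          (Fin.snoc t.1 t.2 : ∀ j : Fin (k + 2), Y j))

/-- The interleaved joint measure of `←P ⊗ →Q` on prefixes of length `k`. -/
noncomputable def jointAux (P : FeedbackFamily X Y n) (Q : ForwardFamily X Y n) :
    (k : ℕ) → k ≤ n + 1 → Measure ((∀ j : Fin k, X j) × (∀ j : Fin k, Y j))
  | 0, _ => Measure.dirac default
  | (k + 1), h =>
      let μ1 := (jointAux P Q k (by omega)) ⊗ₘ (P.p ⟨k, by omega⟩)
      let μ2 := μ1.map
          (fun t : ((∀ j : Fin k, X j) × (∀ j : Fin k, Y j)) × X k =>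
            (t.1.2, (Fin.snoc t.1.1 t.2 : ∀ j : Fin (k + 1), X j)))
      let μ3 := μ2 ⊗ₘ (Q.q ⟨k, by omega⟩)
      μ3.map
          (fun t : ((∀ j : Fin k, Y j) × (∀ j : Fin (k + 1), X j)) × Y k =>
            (t.1.2, (Fin.snoc t.1.1 t.2 : ∀ j : Fin (k + 1), Y j)))

/-- The joint measure `←P ⊗ →Q` on `X_{0,n} × Y_{0,n}`. -/
noncomputable def joint (P : FeedbackFamily X Y n) (Q : ForwardFamily X Y n) :
    Measure ((∀ j : Fin (n + 1), X j) × (∀ j : Fin (n + 1), Y j)) :=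
  jointAux P Q (n + 1) le_rfl

/-- The marginal `ν_{0,n}` of `←P ⊗ →Q` on `Y_{0,n}`. -/
noncomputable def nu (P : FeedbackFamily X Y n) (Q : ForwardFamily X Y n) :
    Measure (∀ j : Fin (n + 1), Y j) :=
  (joint P Q).map Prod.snd

/-- The measure `←P ⊗ λ` on `X_{0,n} × Y_{0,n}`, i.e. the measure
`←P_{0,n}(dx^n | y^{n-1}) ⊗ λ(dy^n)`. -/
noncomputable def backProd (P : FeedbackFamily X Y n) (lam : Measure (∀ j : Fin (n + 1), Y j)) :
    Measure ((∀ j : Fin (n + 1), X j) × (∀ j : Fin (n + 1), Y j)) :=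
  (lam ⊗ₘ ((back P n le_rfl).comap (restr n) (measurable_restr n))).map Prod.swap

open Classical in
/-- Kullback-Leibler divergence (relative entropy) `D(μ ‖ ν)`, with the convention
`D(μ ‖ ν) = ∞` when absolute continuity fails. -/
noncomputable def KL {Z : Type*} [MeasurableSpace Z] (μ ν : Measure Z) : ℝ≥0∞ :=
  if μ ≪ ν ∧ Integrable (llr μ ν) μ then ENNReal.ofReal (∫ z, llr μ ν z ∂μ) else ⊤

/-- Directed information `I(←P, →Q) = D(←P ⊗ →Q ‖ ←P ⊗ ν_{0,n})`. -/
noncomputable def DI (P : FeedbackFamily X Y n) (Q : ForwardFamily X Y n) : ℝ≥0∞ :=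
  KL (joint P Q) (backProd P (nu P Q))

/-- Weak convergence of a sequence of measures: integrals of every bounded continuous
real-valued function converge. -/
def WeakTendsto {Z : Type*} [MeasurableSpace Z] [TopologicalSpace Z]
    (μ : ℕ → Measure Z) (μ0 : Measure Z) : Prop :=
  ∀ f : BoundedContinuousFunction Z ℝ,
    Tendsto (fun α => ∫ z, f z ∂(μ α)) atTop (nhds (∫ z, f z ∂μ0))

/-- Uniform tightness of a family of measures. -/
def UniformlyTight {Z : Type*} [MeasurableSpace Z] [TopologicalSpace Z]
    (M : Set (Measure Z)) : Prop :=
  ∀ ε : ℝ≥0∞, 0 < ε → ∃ K : Set Z, IsCompact K ∧ ∀ μ ∈ M, 1 - ε ≤ μ K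

/-- The marginal `π_i` of `←P ⊗ →Q` on `X_{0,i} × Y_{0,i-1}`. -/
noncomputable def margin (P : FeedbackFamily X Y n) (Q : ForwardFamily X Y n) (i : Fin (n + 1)) :
    Measure ((∀ j : Fin ((i : ℕ) + 1), X j) × (∀ j : Fin (i : ℕ), Y j)) :=
  (joint P Q).map (fun t =>
    ((fun j : Fin ((i : ℕ) + 1) => t.1 (Fin.castLE i.isLt j)),
     (fun j : Fin (i : ℕ) => t.2 (Fin.castLE i.isLt.le j))))

/-- The iterated product measure of a tuple of kernels `(λ_0, …, λ_n)`,
`λ_i : Y_{0,i-1} → Y_i`, on prefixes of length `k`. -/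
noncomputable def chain {Z : ℕ → Type*} [∀ i, MeasurableSpace (Z i)] {n : ℕ}
    (lam : ∀ i : Fin (n + 1), Kernel (∀ j : Fin (i : ℕ), Z j) (Z i)) :
    (k : ℕ) → k ≤ n + 1 → Measure (∀ j : Fin k, Z j)
  | 0, _ => Measure.dirac default
  | (k + 1), h =>
      ((chain lam k (by omega)) ⊗ₘ (lam ⟨k, by omega⟩)).map
        (fun t : (∀ j : Fin k, Z j) × Z k => (Fin.snoc t.1 t.2 : ∀ j : Fin (k + 1), Z j))

/-- The joint measure `←S ⊗ →R` on `X_{0,n} × Y_{0,n}` determined by a reversed pair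
`(S, R)`; a reversed pair is formally a feedback family and a forward family with the
roles of `X` and `Y` interchanged. -/
noncomputable def revJoint (S : FeedbackFamily Y X n) (R : ForwardFamily Y X n) :
    Measure ((∀ j : Fin (n + 1), X j) × (∀ j : Fin (n + 1), Y j)) :=
  (joint S R).map Prod.swap

/-- `∫ log(dσ/dπ) dμ`, as an extended real number (integral of the positive part minus
integral of the negative part). -/
noncomputable def elogInt {Z : Type*} [MeasurableSpace Z] (σ π μ : Measure Z) : EReal :=
  ((∫⁻ z, ENNReal.ofReal (llr σ π z) ∂μ : ℝ≥0∞) : EReal) -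
    ((∫⁻ z, ENNReal.ofReal (-llr σ π z) ∂μ : ℝ≥0∞) : EReal)

/-- `∫ |log(dμ/dν)| dμ`. -/
noncomputable def absKL {Z : Type*} [MeasurableSpace Z] (μ ν : Measure Z) : ℝ≥0∞ :=
  ∫⁻ z, ENNReal.ofReal |llr μ ν z| ∂μ

section Topology

variable [∀ i, TopologicalSpace (X i)] [∀ i, TopologicalSpace (Y i)]

/-- Condition (CA): each `p_i` is weakly (Feller) continuous in the conditioning
variables `(x^{i-1}, y^{i-1})`. -/
def CondCA (P : FeedbackFamily X Y n) : Prop :=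
  ∀ (i : Fin (n + 1)) (g : BoundedContinuousFunction (X i) ℝ),
    Continuous (fun t : (∀ j : Fin (i : ℕ), X j) × (∀ j : Fin (i : ℕ), Y j) =>
      ∫ x, g x ∂(P.p i t))

/-- Condition (CB): each `q_i` is weakly (Feller) continuous in the conditioning
variables `(x^i, y^{i-1})`. -/
def CondCB (Q : ForwardFamily X Y n) : Prop :=
  ∀ (i : Fin (n + 1)) (g : BoundedContinuousFunction (Y i) ℝ),
    Continuous (fun t : (∀ j : Fin ((i : ℕ) + 1), X j) × (∀ j : Fin (i : ℕ), Y j) =>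
      ∫ y, g y ∂(Q.q i (t.2, t.1)))

end Topology

end PaperDI

open scoped BoundedContinuousFunction

namespace ProbabilityTheory.Kernel

variable {T Y Z : Type*} [TopologicalSpace T] [MeasurableSpace T]
  [TopologicalSpace Y] [MeasurableSpace Y] [TopologicalSpace Z] [MeasurableSpace Z]

def IsFeller (κ : Kernel T Z) : Prop :=
  ∀ f : Z →ᵇ ℝ, Continuous fun t => ∫ z, f z ∂κ t

noncomputable def toProbabilityMeasure (κ : Kernel T Z) [IsMarkovKernel κ] (t : T) :
    ProbabilityMeasure Z :=
  ⟨κ t, inferInstance⟩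

lemma isFeller_iff_continuous_toProbabilityMeasure [OpensMeasurableSpace Z] (κ : Kernel T Z)
    [IsMarkovKernel κ] : IsFeller κ ↔ Continuous κ.toProbabilityMeasure := by
  rw [ProbabilityMeasure.continuous_iff_forall_continuous_integral]
  rfl

lemma IsFeller.comap [OpensMeasurableSpace Y] [BorelSpace T] {κ : Kernel T Z}
    (hκ : IsFeller κ) {f : Y → T} (hf : Continuous f) : IsFeller (κ.comap f hf.measurable) :=
  fun g => (hκ g).comp hf

lemma IsFeller.map [OpensMeasurableSpace Y] [BorelSpace Z] {κ : Kernel T Y}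
    (hκ : IsFeller κ) {f : Y → Z} (hf : Continuous f) : IsFeller (κ.map f) := by
  intro g
  have hmap (t : T) : ∫ z, g z ∂κ.map f t = ∫ y, g.compContinuous ⟨f, hf⟩ y ∂κ t := by
    rw [Kernel.map_apply _ hf.measurable,
      integral_map hf.measurable.aemeasurable g.continuous.aestronglyMeasurable]
    rfl
  simpa only [hmap] using hκ (g.compContinuous ⟨f, hf⟩)

section SecondCountable

variable [OpensMeasurableSpace T] [SecondCountableTopology T]
  [TopologicalSpace.PseudoMetrizableSpace T]
  [OpensMeasurableSpace Z] [SecondCountableTopology Z] [TopologicalSpace.PseudoMetrizableSpace Z]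

/-- `∫ z, F (t, z) ∂κ t` is the integral of `F` against `δ_t ⊗ κ t`, and the product of
probability measures is weakly continuous. -/
lemma IsFeller.continuous_integral_prod {κ : Kernel T Z} [IsMarkovKernel κ] (hκ : IsFeller κ)
    (F : T × Z →ᵇ ℝ) : Continuous fun t => ∫ z, F (t, z) ∂κ t := by
  have hprod : Continuous fun t => (diracProba t).prod (κ.toProbabilityMeasure t) :=
    ProbabilityMeasure.continuous_prod.comp
      (continuous_diracProba.prodMk ((isFeller_iff_continuous_toProbabilityMeasure κ).1 hκ))
  refine ((ProbabilityMeasure.continuous_integral_boundedContinuousFunction F).comp hprod).congr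
    fun t => ?_
  change ∫ p, F p ∂(Measure.dirac t).prod (κ t) = _
  rw [Measure.dirac_prod]
  exact integral_map (by fun_prop) F.continuous.aestronglyMeasurable

lemma IsFeller.compProd [OpensMeasurableSpace Y] [SecondCountableTopology Y]
    [TopologicalSpace.PseudoMetrizableSpace Y]
    {κ : Kernel T Y} [IsMarkovKernel κ] {η : Kernel (T × Y) Z} [IsMarkovKernel η]
    (hκ : IsFeller κ) (hη : IsFeller η) : IsFeller (κ ⊗ₖ η) := by
  intro f
  have hbound (p : T × Y) : ‖∫ z, f (p.2, z) ∂η p‖ ≤ ‖f‖ :=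
    (f.compContinuous ⟨fun z => (p.2, z), by fun_prop⟩).norm_integral_le_norm (η p) |>.trans
      (by simpa using f.norm_compContinuous_le _)
  let G : T × Y →ᵇ ℝ := .ofNormedAddCommGroup (fun p => ∫ z, f (p.2, z) ∂η p)
    (hη.continuous_integral_prod (f.compContinuous ⟨fun q => (q.1.2, q.2), by fun_prop⟩))
    ‖f‖ hbound
  refine (hκ.continuous_integral_prod G).congr fun t => ?_
  exact (integral_compProd (f.integrable _)).symm

end SecondCountable

end ProbabilityTheory.Kernel

namespace PaperDI

lemma uniformlyTight_of_isTightMeasureSet {Z : Type*} [TopologicalSpace Z] [MeasurableSpace Z]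
    {M : Set (Measure Z)} (hM : IsTightMeasureSet M) (hprob : ∀ μ ∈ M, IsProbabilityMeasure μ) :
    UniformlyTight M := by
  intro ε hε
  obtain ⟨K, hK, hKc⟩ := isTightMeasureSet_iff_exists_isCompact_measure_compl_le.1 hM ε hε
  refine ⟨K, hK, fun μ hμ => tsub_le_iff_right.2 ?_⟩
  calc 1 = μ (K ∪ Kᶜ) := by rw [Set.union_compl_self, (hprob μ hμ).measure_univ]
    _ ≤ μ K + μ Kᶜ := measure_union_le _ _
    _ ≤ μ K + ε := add_le_add le_rfl (hKc μ hμ)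

/-- The image of `μ` is compact in the weak topology, hence tight by Prokhorov's theorem. -/
lemma uniformlyTight_of_continuous {T Z : Type*} [TopologicalSpace T] [CompactSpace T]
    [TopologicalSpace Z] [PolishSpace Z] [MeasurableSpace Z] [BorelSpace Z]
    {μ : T → ProbabilityMeasure Z} (hμ : Continuous μ) :
    UniformlyTight {ν : Measure Z | ∃ t, ν = μ t} := by
  let := TopologicalSpace.upgradeIsCompletelyMetrizable Z
  have hS := isTightMeasureSet_of_isCompact_closure (isCompact_range hμ).closure
  have hset : {ν : Measure Z | ∃ t, ν = μ t} = {(ν : Measure Z) | ν ∈ Set.range μ} := by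
    ext ν
    simp [eq_comm]
  exact uniformlyTight_of_isTightMeasureSet (hset ▸ hS) (by rintro _ ⟨t, rfl⟩; infer_instance)

variable {X Y : ℕ → Type*} [∀ i, MeasurableSpace (X i)] [∀ i, MeasurableSpace (Y i)] {n : ℕ}

instance isMarkovKernel_fwd (Q : ForwardFamily X Y n) (k : ℕ) (h : k ≤ n) :
    IsMarkovKernel (fwd Q k h) := by
  have := Q.markov
  induction k with
  | zero =>
    rw [fwd]
    exact Kernel.IsMarkovKernel.map _
      ((measurable_finSnoc 0).comp (measurable_const.prodMk measurable_id))
  | succ k ih =>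
    have := ih (by omega)
    rw [fwd]
    exact Kernel.IsMarkovKernel.map _ (measurable_finSnoc (k + 1))

section Feller

variable [∀ i, TopologicalSpace (X i)] [∀ i, TopologicalSpace (Y i)]

lemma CondCB.isFeller {Q : ForwardFamily X Y n} (hCB : CondCB Q) (i : Fin (n + 1)) :
    ((Q.q i).comap (fun t : (∀ j : Fin ((i : ℕ) + 1), X j) × (∀ j : Fin (i : ℕ), Y j) =>
      (t.2, t.1)) (measurable_snd.prodMk measurable_fst)).IsFeller :=
  hCB i

variable [∀ i, BorelSpace (X i)] [∀ i, PolishSpace (X i)]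
  [∀ i, BorelSpace (Y i)] [∀ i, PolishSpace (Y i)]

lemma isFeller_fwd (Q : ForwardFamily X Y n) (hCB : CondCB Q) (k : ℕ) (h : k ≤ n) :
    (fwd Q k h).IsFeller := by
  have := Q.markov
  induction k with
  | zero =>
    rw [fwd]
    refine Kernel.IsFeller.map ?_ (by fun_prop)
    exact (hCB.isFeller ⟨0, n.succ_pos⟩).comap (f := fun x => (x, default)) (by fun_prop)
  | succ k ih =>
    rw [fwd]
    refine Kernel.IsFeller.map ?_ (by fun_prop)
    have hrestr : Continuous (restr (Z := X) (k + 1)) := continuous_pi fun _ => continuous_apply _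
    exact ((ih (by omega)).comap hrestr).compProd (hCB.isFeller ⟨k + 1, by omega⟩)

end Feller

section Statements

variable {X Y : ℕ → Type*} {n : ℕ}
  [∀ i, TopologicalSpace (X i)] [∀ i, MeasurableSpace (X i)] [∀ i, BorelSpace (X i)]
  [∀ i, PolishSpace (X i)]
  [∀ i, TopologicalSpace (Y i)] [∀ i, MeasurableSpace (Y i)] [∀ i, BorelSpace (Y i)]
  [∀ i, PolishSpace (Y i)]

/-- If the `X_i` are compact Polish, the `Y_i` Polish, and the forward
family `Q` satisfies (CB), then the family `{→Q_{0,n}(· | x^n) : x^n}` is uniformly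
tight, hence relatively compact for weak convergence. -/
theorem fwd_kernel_family_uniformly_tight [∀ i, CompactSpace (X i)]
    (Q : ForwardFamily X Y n) (hCB : CondCB Q) :
    UniformlyTight {μ : Measure (∀ j : Fin (n + 1), Y j) |
        ∃ x : ∀ j : Fin (n + 1), X j, μ = fwd Q n le_rfl x} ∧
    ∀ x : ℕ → ∀ j : Fin (n + 1), X j,
      ∃ (φ : ℕ → ℕ) (μ0 : Measure (∀ j : Fin (n + 1), Y j)),
        StrictMono φ ∧ IsProbabilityMeasure μ0 ∧
          WeakTendsto (fun k => fwd Q n le_rfl (x (φ k))) μ0 := by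
  have hcont := ((fwd Q n le_rfl).isFeller_iff_continuous_toProbabilityMeasure).1
    (isFeller_fwd Q hCB n le_rfl)
  refine ⟨uniformlyTight_of_continuous hcont, fun x => ?_⟩
  obtain ⟨x₀, φ, hφ, hx⟩ := CompactSpace.tendsto_subseq x
  exact ⟨φ, fwd Q n le_rfl x₀, hφ, inferInstance,
    ProbabilityMeasure.tendsto_iff_forall_integral_tendsto.1 ((hcont.tendsto x₀).comp hx)⟩

end Statements

end PaperDI
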